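/- arXiv:1611.02356 — 2 statements merged into one kernel-verified Lean document; each statement's English description precedes it below -/
import Mathlib

section
/- For every r > 0, the inequality 1 − (1/r)·(I₁(r)/I₀(r)) − (I₁(r)/I₀(r))² > 0 holds, where I₀(r) = (1/π)∫₀^π e^{r cos θ} dθ and I₁(r) = (1/π)∫₀^π e^{r cos θ} cos θ dθ. -/
/-!
Write `m = I₁(r)/I₀(r)` for the mean of `cos θ` under the probability weight
`exp (r cos θ) dθ / (π I₀(r))` on `[0, π]`. Integrating `d/dθ (sin θ · exp (r cos θ))` gives
`∫ e^{r cos θ} cos θ = r ∫ e^{r cos θ} sin² θ`, i.e. `m / r = 1 - E[cos² θ]`. Hence the quantity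
`1 - m / r - m²` is `E[cos² θ] - m²`, the variance of `cos θ`, which is positive because `cos` is
not constant on `[0, π]`.
-/

open MeasureTheory Real Filter

/-- Modified Bessel function of the first kind, order 0. -/
noncomputable def besselI0 (r : ℝ) : ℝ :=
  (1 / Real.pi) * ∫ θ in (0 : ℝ)..Real.pi, Real.exp (r * Real.cos θ)

/-- Modified Bessel function of the first kind, order 1. -/
noncomputable def besselI1 (r : ℝ) : ℝ :=
  (1 / Real.pi) * ∫ θ in (0 : ℝ)..Real.pi, Real.exp (r * Real.cos θ) * Real.cos θ

section WeightedVariance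

variable {w f : ℝ → ℝ} {a b : ℝ}

theorem integral_mul_sub_sq_eq (hw : ContinuousOn w (Set.uIcc a b))
    (hf : ContinuousOn f (Set.uIcc a b)) (m : ℝ) :
    ∫ x in a..b, w x * (f x - m) ^ 2 =
      (∫ x in a..b, w x * f x ^ 2) - 2 * m * (∫ x in a..b, w x * f x) +
        m ^ 2 * ∫ x in a..b, w x := by
  have hw₀ : IntervalIntegrable w volume a b := hw.intervalIntegrable
  have hw₁ : IntervalIntegrable (fun x => w x * f x) volume a b :=
    (hw.mul hf).intervalIntegrable
  have hw₂ : IntervalIntegrable (fun x => w x * f x ^ 2) volume a b :=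
    (hw.mul (hf.pow 2)).intervalIntegrable
  calc ∫ x in a..b, w x * (f x - m) ^ 2
      = ∫ x in a..b, (w x * f x ^ 2 - 2 * m * (w x * f x)) + m ^ 2 * w x := by
        congr 1 with x; ring
    _ = _ := by
      rw [intervalIntegral.integral_add (hw₂.sub (hw₁.const_mul _)) (hw₀.const_mul _),
        intervalIntegral.integral_sub hw₂ (hw₁.const_mul _),
        intervalIntegral.integral_const_mul, intervalIntegral.integral_const_mul]

theorem integral_mul_sub_sq_pos (hab : a < b) (hw : ContinuousOn w (Set.Icc a b))
    (hw_pos : ∀ x ∈ Set.Icc a b, 0 < w x) (hf : ContinuousOn f (Set.Icc a b)) {m : ℝ}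
    (hfm : ∃ c ∈ Set.Icc a b, f c ≠ m) :
    0 < ∫ x in a..b, w x * (f x - m) ^ 2 := by
  obtain ⟨c, hc, hfc⟩ := hfm
  refine intervalIntegral.integral_pos hab (hw.mul ((hf.sub continuousOn_const).pow 2))
    (fun x hx => ?_) ⟨c, hc, ?_⟩
  · exact mul_nonneg (hw_pos x (Set.Ioc_subset_Icc_self hx)).le (sq_nonneg _)
  · exact mul_pos (hw_pos c hc) (sq_pos_of_ne_zero (sub_ne_zero.2 hfc))

end WeightedVariance

theorem integral_exp_mul_cos_mul_cos (r : ℝ) :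
    ∫ θ in (0 : ℝ)..π, exp (r * cos θ) * cos θ =
      r * ((∫ θ in (0 : ℝ)..π, exp (r * cos θ)) -
        ∫ θ in (0 : ℝ)..π, exp (r * cos θ) * cos θ ^ 2) := by
  have hderiv : ∀ θ ∈ Set.uIcc 0 π, HasDerivAt (fun θ => sin θ * exp (r * cos θ))
      (exp (r * cos θ) * cos θ - r * (exp (r * cos θ) - exp (r * cos θ) * cos θ ^ 2)) θ := by
    intro θ _
    refine ((hasDerivAt_sin θ).mul ((hasDerivAt_cos θ).const_mul r).exp).congr_deriv ?_
    linear_combination -(r * exp (r * cos θ)) * sin_sq_add_cos_sq θ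
  have hw : Continuous fun θ => exp (r * cos θ) := by fun_prop
  have h₀ : IntervalIntegrable (fun θ => exp (r * cos θ)) volume 0 π :=
    hw.intervalIntegrable _ _
  have h₁ : IntervalIntegrable (fun θ => exp (r * cos θ) * cos θ) volume 0 π :=
    (hw.mul continuous_cos).intervalIntegrable _ _
  have h₂ : IntervalIntegrable (fun θ => exp (r * cos θ) * cos θ ^ 2) volume 0 π :=
    (hw.mul (continuous_cos.pow 2)).intervalIntegrable _ _
  have hFTC := intervalIntegral.integral_eq_sub_of_hasDerivAt hderiv
    (h₁.sub ((h₀.sub h₂).const_mul r))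
  rw [intervalIntegral.integral_sub h₁ ((h₀.sub h₂).const_mul r),
    intervalIntegral.integral_const_mul, intervalIntegral.integral_sub h₀ h₂] at hFTC
  simp only [sin_pi, sin_zero, zero_mul, sub_zero] at hFTC
  linarith

theorem besselI1_div_besselI0 (r : ℝ) :
    besselI1 r / besselI0 r =
      (∫ θ in (0 : ℝ)..π, exp (r * cos θ) * cos θ) / ∫ θ in (0 : ℝ)..π, exp (r * cos θ) :=
  mul_div_mul_left _ _ (one_div_ne_zero pi_ne_zero)

theorem variance_positivity (r : ℝ) (hr : 0 < r) :
    0 < 1 - (1 / r) * (besselI1 r / besselI0 r) - (besselI1 r / besselI0 r) ^ 2 := by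
  have hw : Continuous fun θ => exp (r * cos θ) := by fun_prop
  set A := ∫ θ in (0 : ℝ)..π, exp (r * cos θ)
  set B := ∫ θ in (0 : ℝ)..π, exp (r * cos θ) * cos θ
  set C := ∫ θ in (0 : ℝ)..π, exp (r * cos θ) * cos θ ^ 2
  have hA : 0 < A := intervalIntegral.intervalIntegral_pos_of_pos (hw.intervalIntegrable _ _)
    (fun _ => exp_pos _) pi_pos
  have hB : B = r * (A - C) := integral_exp_mul_cos_mul_cos r
  have hV : 0 < C - 2 * (B / A) * B + (B / A) ^ 2 * A := by
    rw [← integral_mul_sub_sq_eq hw.continuousOn continuous_cos.continuousOn]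
    refine integral_mul_sub_sq_pos pi_pos hw.continuousOn (fun _ _ => exp_pos _)
      continuous_cos.continuousOn ?_
    obtain h | h := eq_or_ne (cos 0) (B / A)
    · refine ⟨π, ⟨pi_pos.le, le_rfl⟩, ?_⟩
      rw [cos_pi, ← h, cos_zero]
      norm_num
    · exact ⟨0, ⟨le_rfl, pi_pos.le⟩, h⟩
  rw [besselI1_div_besselI0]
  calc 0 < (C - 2 * (B / A) * B + (B / A) ^ 2 * A) / A := div_pos hV hA
    _ = 1 - 1 / r * (B / A) - (B / A) ^ 2 := by
      rw [hB]
      field_simp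
      ring
end

section
/- The function g₃(r) = r/(coth(r) − 1/r) defined for r > 0 satisfies lim_{r→0⁺} g₃(r) = 3, and g₃ is strictly increasing on (0,∞) with lim_{r→∞} g₃(r) = ∞; consequently for every β > 3 there exists a unique r > 0 with g₃(r) = β. -/
open Real Filter Set

/-- The function `g₃(r) = r / (coth r − 1/r)` determining the supercritical
minimizer of the mean-field Heisenberg model. -/
noncomputable def gThree (r : ℝ) : ℝ := r / (Real.cosh r / Real.sinh r - 1 / r)

/-!
For `r > 0` one has `g₃ r = r² sinh r / (r cosh r - sinh r)`. Differentiating from `0` shows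
`r³/3 < r cosh r - sinh r < r³ cosh r / 3`, so `g₃ r` is squeezed between `3 sinh r / (r cosh r)`
and `3 sinh r / r`, both tending to `3`. For `r ≥ 1`, `cosh r ≤ 2 sinh r` gives `g₃ r ≥ r / 2`.
The derivative of `g₃` at `r` has the sign of `s sinh s + s² + 4 - 4 cosh s` at `s = 2r`, which
is positive because its first three derivatives are, the third being `s cosh s - sinh s`.
Existence then follows from the intermediate value theorem, uniqueness from monotonicity.
-/

open Topology

theorem pos_of_hasDerivAt_pos {f f' : ℝ → ℝ} {a x : ℝ} (hf : ∀ y, HasDerivAt f (f' y) y)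
    (hf' : ∀ y, a < y → 0 < f' y) (ha : f a = 0) (hx : a < x) : 0 < f x :=
  ha ▸ strictMonoOn_of_hasDerivWithinAt_pos (convex_Ici a)
    (fun y _ ↦ (hf y).continuousAt.continuousWithinAt) (fun y _ ↦ (hf y).hasDerivWithinAt)
    (by simpa using hf') self_mem_Ici hx.le hx

theorem ContinuousOn.Ioi_subset_image_Ioi {α δ : Type*} [ConditionallyCompleteLinearOrder α]
    [TopologicalSpace α] [OrderTopology α] [DenselyOrdered α] [NoMaxOrder α]
    [LinearOrder δ] [TopologicalSpace δ] [OrderTopology δ] {f : α → δ} {a : α} {l : δ}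
    (hf : ContinuousOn f (Ioi a)) (hl : Tendsto f (𝓝[>] a) (𝓝 l))
    (htop : Tendsto f atTop atTop) : Ioi l ⊆ f '' Ioi a := by
  intro β hβ
  obtain ⟨x, hxβ, hx⟩ := ((hl.eventually_lt_const hβ).and self_mem_nhdsWithin).exists
  obtain ⟨y, hyβ, hy⟩ := ((htop.eventually_ge_atTop β).and (eventually_gt_atTop a)).exists
  exact isPreconnected_Ioi.intermediate_value hx hy hf ⟨hxβ.le, hyβ⟩

namespace Real

variable {x : ℝ}

theorem cube_div_three_lt_mul_cosh_sub_sinh (hx : 0 < x) : x ^ 3 / 3 < x * cosh x - sinh x := by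
  have hd : ∀ y, HasDerivAt (fun y ↦ y * cosh y - sinh y - y ^ 3 / 3) (y * (sinh y - y)) y :=
    fun y ↦ (((hasDerivAt_id' y).mul (hasDerivAt_cosh y)).sub (hasDerivAt_sinh y)).sub
      ((hasDerivAt_pow 3 y).div_const 3) |>.congr_deriv (by ring)
  have h := pos_of_hasDerivAt_pos hd
    (fun y hy ↦ mul_pos hy (sub_pos.2 (self_lt_sinh_iff.2 hy))) (by simp) hx
  exact sub_pos.1 h

theorem sinh_lt_mul_cosh (hx : 0 < x) : sinh x < x * cosh x := by
  linarith [cube_div_three_lt_mul_cosh_sub_sinh hx, pow_pos hx 3]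

theorem mul_cosh_sub_sinh_lt (hx : 0 < x) : x * cosh x - sinh x < x ^ 3 / 3 * cosh x := by
  have hd : ∀ y, HasDerivAt (fun y ↦ y ^ 3 / 3 * cosh y - (y * cosh y - sinh y))
      (y * (y * cosh y - sinh y) + y ^ 3 * sinh y / 3) y :=
    fun y ↦ (((hasDerivAt_pow 3 y).div_const 3).mul (hasDerivAt_cosh y)).sub
      (((hasDerivAt_id' y).mul (hasDerivAt_cosh y)).sub (hasDerivAt_sinh y))
      |>.congr_deriv (by ring)
  have h := pos_of_hasDerivAt_pos hd (fun y hy ↦ by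
    have := sinh_pos_iff.2 hy
    have := sub_pos.2 (sinh_lt_mul_cosh hy)
    positivity) (by simp) hx
  exact sub_pos.1 h

theorem two_mul_cosh_lt_mul_sinh_add_two (hx : 0 < x) : 2 * cosh x < x * sinh x + 2 := by
  have hd : ∀ y, HasDerivAt (fun y ↦ y * sinh y + 2 - 2 * cosh y) (y * cosh y - sinh y) y :=
    fun y ↦ ((((hasDerivAt_id' y).mul (hasDerivAt_sinh y)).add_const 2).sub
      ((hasDerivAt_cosh y).const_mul 2)) |>.congr_deriv (by ring)
  have h := pos_of_hasDerivAt_pos hd (fun y hy ↦ sub_pos.2 (sinh_lt_mul_cosh hy))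
    (by simp) hx
  exact sub_pos.1 h

theorem three_mul_sinh_lt_mul_cosh_add_two_mul (hx : 0 < x) :
    3 * sinh x < x * cosh x + 2 * x := by
  have hd : ∀ y, HasDerivAt (fun y ↦ y * cosh y + 2 * y - 3 * sinh y)
      (y * sinh y + 2 - 2 * cosh y) y :=
    fun y ↦ ((((hasDerivAt_id' y).mul (hasDerivAt_cosh y)).add
      ((hasDerivAt_id' y).const_mul 2)).sub ((hasDerivAt_sinh y).const_mul 3))
      |>.congr_deriv (by ring)
  have h := pos_of_hasDerivAt_pos hd
    (fun y hy ↦ sub_pos.2 (two_mul_cosh_lt_mul_sinh_add_two hy)) (by simp) hx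
  exact sub_pos.1 h

theorem four_mul_cosh_lt_mul_sinh_add_sq_add_four (hx : 0 < x) :
    4 * cosh x < x * sinh x + x ^ 2 + 4 := by
  have hd : ∀ y, HasDerivAt (fun y ↦ y * sinh y + y ^ 2 + 4 - 4 * cosh y)
      (y * cosh y + 2 * y - 3 * sinh y) y :=
    fun y ↦ (((((hasDerivAt_id' y).mul (hasDerivAt_sinh y)).add (hasDerivAt_pow 2 y)).add_const
      4).sub ((hasDerivAt_cosh y).const_mul 4)) |>.congr_deriv (by ring)
  have h := pos_of_hasDerivAt_pos hd
    (fun y hy ↦ sub_pos.2 (three_mul_sinh_lt_mul_cosh_add_two_mul hy)) (by simp) hx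
  exact sub_pos.1 h

theorem two_mul_sinh_sq_lt (hx : 0 < x) : 2 * sinh x ^ 2 < x * sinh x * cosh x + x ^ 2 := by
  have := four_mul_cosh_lt_mul_sinh_add_sq_add_four (mul_pos two_pos hx)
  rw [sinh_two_mul, cosh_two_mul, cosh_sq] at this
  linarith

theorem tendsto_sinh_div_self : Tendsto (fun x ↦ sinh x / x) (𝓝[≠] 0) (𝓝 1) := by
  simpa [div_eq_inv_mul] using (hasDerivAt_sinh 0).tendsto_slope_zero

end Real

section gThree

variable {r : ℝ}

theorem gThree_eq_of_pos (hr : 0 < r) :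
    gThree r = r ^ 2 * sinh r / (r * cosh r - sinh r) := by
  have := (sinh_pos_iff.2 hr).ne'
  have := (sub_pos.2 (sinh_lt_mul_cosh hr)).ne'
  rw [gThree]
  field_simp

theorem hasDerivAt_gThree (hr : 0 < r) :
    HasDerivAt gThree
      (r * (r * sinh r * cosh r - 2 * sinh r ^ 2 + r ^ 2) / (r * cosh r - sinh r) ^ 2) r := by
  have hD := (sub_pos.2 (sinh_lt_mul_cosh hr)).ne'
  have hnum : HasDerivAt (fun x ↦ x ^ 2 * sinh x) (2 * r * sinh r + r ^ 2 * cosh r) r :=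
    (hasDerivAt_pow 2 r).mul (hasDerivAt_sinh r) |>.congr_deriv (by push_cast; ring)
  have hden : HasDerivAt (fun x ↦ x * cosh x - sinh x) (r * sinh r) r :=
    ((hasDerivAt_id' r).mul (hasDerivAt_cosh r)).sub (hasDerivAt_sinh r) |>.congr_deriv (by ring)
  refine ((hnum.div hden hD).congr_deriv ?_).congr_of_eventuallyEq ?_
  · congr 1
    linear_combination r ^ 3 * cosh_sq_sub_sinh_sq r
  · filter_upwards [Ioi_mem_nhds hr] with x hx using gThree_eq_of_pos hx

theorem continuousOn_gThree : ContinuousOn gThree (Ioi 0) :=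
  fun _ hr ↦ (hasDerivAt_gThree hr).continuousAt.continuousWithinAt

theorem strictMonoOn_gThree : StrictMonoOn gThree (Ioi 0) := by
  refine strictMonoOn_of_deriv_pos (convex_Ioi 0) continuousOn_gThree fun r hr ↦ ?_
  rw [interior_Ioi] at hr
  rw [(hasDerivAt_gThree hr).deriv]
  exact div_pos (mul_pos hr (by linarith [two_mul_sinh_sq_lt hr]))
    (pow_pos (sub_pos.2 (sinh_lt_mul_cosh hr)) 2)

theorem gThree_mem_Ioo (hr : 0 < r) :
    gThree r ∈ Ioo (3 * (sinh r / r) / cosh r) (3 * (sinh r / r)) := by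
  have hs := sinh_pos_iff.2 hr
  have hN : 0 < r ^ 2 * sinh r := by positivity
  rw [gThree_eq_of_pos hr]
  constructor
  · calc 3 * (sinh r / r) / cosh r = r ^ 2 * sinh r / (r ^ 3 / 3 * cosh r) := by
          field_simp
      _ < _ := div_lt_div_of_pos_left hN (sub_pos.2 (sinh_lt_mul_cosh hr))
          (mul_cosh_sub_sinh_lt hr)
  · calc _ < r ^ 2 * sinh r / (r ^ 3 / 3) :=
          div_lt_div_of_pos_left hN (by positivity) (cube_div_three_lt_mul_cosh_sub_sinh hr)
      _ = 3 * (sinh r / r) := by field_simp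

theorem tendsto_gThree_nhdsGT_zero : Tendsto gThree (𝓝[>] 0) (𝓝 3) := by
  have hsinh := tendsto_sinh_div_self.mono_left (nhdsGT_le_nhdsNE 0)
  have hcosh : Tendsto cosh (𝓝[>] 0) (𝓝 1) := by
    simpa using (continuous_cosh.tendsto 0).mono_left nhdsWithin_le_nhds
  have hlow : Tendsto (fun r ↦ 3 * (sinh r / r) / cosh r) (𝓝[>] 0) (𝓝 3) := by
    simpa [Pi.div_def] using (hsinh.const_mul 3).div hcosh one_ne_zero
  have hhigh : Tendsto (fun r ↦ 3 * (sinh r / r)) (𝓝[>] 0) (𝓝 3) := by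
    simpa using hsinh.const_mul 3
  refine tendsto_of_tendsto_of_tendsto_of_le_of_le' hlow hhigh ?_ ?_ <;>
    filter_upwards [self_mem_nhdsWithin] with r hr
  exacts [(gThree_mem_Ioo hr).1.le, (gThree_mem_Ioo hr).2.le]

theorem half_le_gThree (hr : 1 ≤ r) : r / 2 ≤ gThree r := by
  have h0 : 0 < r := by linarith
  have hsinh := self_le_sinh_iff.2 h0.le
  have hexp : exp (-r) ≤ 1 := exp_le_one_iff.2 (by linarith)
  have hcosh : cosh r ≤ 2 * sinh r := by linarith [cosh_sub_sinh r]
  rw [gThree_eq_of_pos h0, le_div_iff₀ (sub_pos.2 (sinh_lt_mul_cosh h0))]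
  nlinarith

theorem tendsto_gThree_atTop : Tendsto gThree atTop atTop :=
  tendsto_atTop_mono' atTop ((eventually_ge_atTop 1).mono fun _ ↦ half_le_gThree)
    (tendsto_id.atTop_div_const two_pos)

end gThree

theorem gThree_properties :
    Tendsto gThree (nhdsWithin 0 (Set.Ioi 0)) (nhds 3) ∧
      StrictMonoOn gThree (Set.Ioi (0 : ℝ)) ∧
      Tendsto gThree atTop atTop ∧
      ∀ β : ℝ, 3 < β → ∃! r : ℝ, 0 < r ∧ gThree r = β := by
  refine ⟨tendsto_gThree_nhdsGT_zero, strictMonoOn_gThree, tendsto_gThree_atTop,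
    fun β hβ ↦ ?_⟩
  obtain ⟨r, hr, rfl⟩ := continuousOn_gThree.Ioi_subset_image_Ioi tendsto_gThree_nhdsGT_zero
    tendsto_gThree_atTop hβ
  exact ⟨r, ⟨hr, rfl⟩, fun s ⟨hs, hsr⟩ ↦ strictMonoOn_gThree.injOn hs hr hsr⟩
end
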